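/- Fix an integer k ≥ 3. For all sufficiently large n and every integer m with 0 ≤ m ≤ n/2^{13}, one has |F_m| ≥ 2^m · |F_0|, where F_0 is the set of acyclic C_k-free oriented graphs on [n]. -/

import Mathlib

open scoped Classical

/-- An arc set on `Fin n`: a digraph on vertex set `[n]` is identified with its
finite set of arcs. -/
abbrev ArcSet (n : ℕ) := Finset (Fin n × Fin n)

/-- A digraph is loopless. -/
def IsLoopless {n : ℕ} (E : ArcSet n) : Prop := ∀ v : Fin n, (v, v) ∉ E

/-- An oriented graph: loopless and at most one of the arcs `(u,v)`, `(v,u)`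
is present for each pair. -/
def IsOriented {n : ℕ} (E : ArcSet n) : Prop :=
  IsLoopless E ∧ ∀ u v : Fin n, (u, v) ∈ E → (v, u) ∉ E

/-- `E` contains a (not necessarily induced) copy of the directed cycle `C_k`. -/
def ContainsCycle {n : ℕ} (k : ℕ) (E : ArcSet n) : Prop :=
  ∃ f : ZMod k → Fin n, Function.Injective f ∧ ∀ i : ZMod k, (f i, f (i + 1)) ∈ E

/-- `E` is `C_k`-free. -/
def CkFree {n : ℕ} (k : ℕ) (E : ArcSet n) : Prop := ¬ ContainsCycle k E

/-- The number of backwards arcs of `E` with respect to the ordering `σ`: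
arcs `(u,v)` with `σ u > σ v`. -/
def backCount {n : ℕ} (E : ArcSet n) (σ : Equiv.Perm (Fin n)) : ℕ :=
  (E.filter fun e => σ e.2 < σ e.1).card

/-- `b(E)`: the minimum number of backwards arcs over all orderings, i.e. the
number of backwards arcs in a transitive-optimal ordering. -/
noncomputable def bMin {n : ℕ} (E : ArcSet n) : ℕ :=
  Finset.univ.inf' Finset.univ_nonempty (backCount E)

/-- `E` is acyclic: it contains no directed cycle of any positive length. -/
def IsAcyclic {n : ℕ} (E : ArcSet n) : Prop :=
  ∀ l : ℕ, 0 < l → ¬ ContainsCycle l E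

/-- `F_m(n,k)`: the set of `C_k`-free oriented graphs on `[n]` with `b(G) = m`. -/
noncomputable def Fm (n k m : ℕ) : Finset (ArcSet n) :=
  Finset.univ.filter fun E => IsOriented E ∧ CkFree k E ∧ bMin E = m

/-- `F_0(n,k)`: the set of acyclic `C_k`-free oriented graphs on `[n]`. -/
noncomputable def F0 (n k : ℕ) : Finset (ArcSet n) :=
  Finset.univ.filter fun E => IsOriented E ∧ CkFree k E ∧ IsAcyclic E

/-!
Fix a cycle length `l ∈ {3, 4}` other than `k`. Given an acyclic `G` listed in a topological
order, cut the positions into `m` groups of `2¹¹` slots of `l` consecutive positions and pick one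
slot `s i` in each group; replacing the arcs of `G` inside each picked slot by the directed
`l`-cycle through it gives an oriented graph `H` with `b(H) = m` whose cycles all run around one
inserted cycle, so `H ∈ F_m`. The arcs of `H` lying on closed walks are exactly those of the
inserted cycles, so `H` determines them, and `(G, s)` is recovered from `H` once one also knows,
for every inserted cycle, where its block starts and which of the `≤ 6` pairs inside the block are
arcs of `G`. Hence each `H` has at most `(l · 2^(l choose 2))^m ≤ 2^(8m)` preimages and
`|F_0| 2^(11m) ≤ 2^(8m) |F_m|`.
-/

open Finset Function

lemma Nat.eq_and_eq_of_mul_add_eq {l a b c d : ℕ} (hb : b < l) (hd : d < l)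
    (h : a * l + b = c * l + d) : a = c ∧ b = d := by
  have hac : a = c := by
    by_contra hne
    rcases Nat.lt_or_gt_of_ne hne with hlt | hlt <;> nlinarith
  subst hac
  exact ⟨rfl, by omega⟩

section Cycles

variable {n : ℕ} {E : ArcSet n}

lemma Function.Periodic.eq_of_natCast_eq {α : Type*} {g : ℕ → α} {q : ℕ} (hg : Periodic g q)
    {a b : ℕ} (h : (a : ZMod q) = b) : g a = g b := by
  rw [← hg.map_mod_nat a, ← hg.map_mod_nat b, (ZMod.natCast_eq_natCast_iff' a b q).mp h]

lemma containsCycle_of_periodic {q : ℕ} [NeZero q] {g : ℕ → Fin n} (hper : Periodic g q)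
    (harc : ∀ a, (g a, g (a + 1)) ∈ E) (hinj : Set.InjOn g (Set.Iio q)) :
    ContainsCycle q E := by
  refine ⟨fun z => g z.val,
    fun z w h => ZMod.val_injective q (hinj (ZMod.val_lt z) (ZMod.val_lt w) h), fun z => ?_⟩
  have hsucc : g (z + 1).val = g (z.val + 1) := hper.eq_of_natCast_eq (by simp)
  simpa only [hsucc] using harc z.val

lemma ContainsCycle.exists_periodic {p : ℕ} (h : ContainsCycle p E) :
    ∃ g : ℕ → Fin n, Periodic g p ∧ (∀ a, (g a, g (a + 1)) ∈ E) ∧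
      ∀ a b, g a = g b → (a : ZMod p) = b := by
  obtain ⟨f, hf, harc⟩ := h
  exact ⟨fun a => f a, fun a => by simp, fun a => by simpa using harc a, fun a b h => hf h⟩

lemma exists_containsCycle_of_closed_walk {q : ℕ} {g : ℕ → Fin n} (hq : 0 < q)
    (hclosed : g q = g 0) (harc : ∀ a < q, (g a, g (a + 1)) ∈ E) :
    ∃ p, 0 < p ∧ ContainsCycle p E := by
  induction q using Nat.strong_induction_on generalizing g with
  | _ q ih =>
    by_cases hinj : Set.InjOn g (Set.Iio q)
    · have : NeZero q := ⟨hq.ne'⟩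
      have hwrap : ∀ r ≤ q, g (r % q) = g r := fun r hr => by
        rcases hr.lt_or_eq with h | rfl
        · rw [Nat.mod_eq_of_lt h]
        · rw [Nat.mod_self, hclosed]
      refine ⟨q, hq, containsCycle_of_periodic (g := fun a => g (a % q)) (fun a => by simp)
        (fun a => ?_) (fun a ha b hb h => hinj ha hb ?_)⟩
      · have hr := Nat.mod_lt a hq
        simpa only [← Nat.mod_add_mod a q 1, hwrap _ hr] using harc _ hr
      · simpa only [Nat.mod_eq_of_lt (Set.mem_Iio.mp ha), Nat.mod_eq_of_lt (Set.mem_Iio.mp hb)]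
          using h
    · -- a repeated vertex `g i = g j` cuts out the shorter closed walk `g i, …, g j`
      have shorter :
          ∀ i j, i < j → j < q → g i = g j → ∃ p, 0 < p ∧ ContainsCycle p E :=
        fun i j hij hj heq => ih (j - i) (by omega) (g := fun a => g (i + a)) (by omega)
          (by simp only [Nat.add_zero, Nat.add_sub_cancel' hij.le, heq])
          (fun a ha => by simpa only [Nat.add_assoc] using harc (i + a) (by omega))
      simp only [Set.InjOn, Set.mem_Iio, not_forall] at hinj
      obtain ⟨i, hi, j, hj, heq, hne⟩ := hinj
      rcases Nat.lt_or_gt_of_ne hne with h | h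
      · exact shorter i j h hj heq
      · exact shorter j i h hi heq.symm

lemma exists_walk_of_transGen {u v : Fin n} (h : Relation.TransGen (fun a b => (a, b) ∈ E) u v) :
    ∃ q, 0 < q ∧ ∃ g : ℕ → Fin n, g 0 = u ∧ g q = v ∧
      ∀ a < q, (g a, g (a + 1)) ∈ E := by
  induction h with
  | @single b hub =>
    exact ⟨1, Nat.one_pos, update (fun _ => b) 0 u, by simp, by simp,
      fun a ha => by simpa [Nat.lt_one_iff.mp ha] using hub⟩
  | @tail b c _ hbc ih =>
    obtain ⟨q, hq, g, hg0, hgq, harc⟩ := ih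
    refine ⟨q + 1, q.succ_pos, update g (q + 1) c, by simp [hg0], by simp, fun a ha => ?_⟩
    rcases Nat.lt_succ_iff_lt_or_eq.mp ha with ha | rfl
    · simpa [update_of_ne (show a ≠ q + 1 by omega),
        update_of_ne (show a + 1 ≠ q + 1 by omega)] using harc a ha
    · simpa [hgq] using hbc

lemma IsAcyclic.not_transGen_self (hA : IsAcyclic E) (v : Fin n) :
    ¬ Relation.TransGen (fun a b => (a, b) ∈ E) v v := fun h => by
  obtain ⟨q, hq, g, hg0, hgq, harc⟩ := exists_walk_of_transGen h
  obtain ⟨p, hp, hcyc⟩ := exists_containsCycle_of_closed_walk hq (hgq.trans hg0.symm) harc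
  exact hA p hp hcyc

end Cycles

lemma IsAcyclic.of_mem_F0 {n k : ℕ} {E : ArcSet n} (h : E ∈ F0 n k) : IsAcyclic E :=
  (mem_filter.mp h).2.2.2

section TopologicalOrder

variable {n : ℕ}

lemma exists_perm_lt_iff_of_injective {α : Type*} [LinearOrder α] {f : Fin n → α}
    (hf : Injective f) : ∃ σ : Equiv.Perm (Fin n), ∀ a b, σ a < σ b ↔ f a < f b := by
  let e := (univ.image f).orderIsoOfFin (by rw [card_image_of_injective _ hf, card_fin])
  let g : Fin n → Fin n := fun v => e.symm ⟨f v, mem_image_of_mem f (mem_univ v)⟩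
  have hg : Injective g := fun a b h => hf (congrArg Subtype.val (e.symm.injective h))
  exact ⟨Equiv.ofBijective g (Finite.injective_iff_bijective.mp hg),
    fun a b => e.symm.lt_iff_lt.trans Subtype.mk_lt_mk⟩

def IsForward (E : ArcSet n) (σ : Equiv.Perm (Fin n)) : Prop := ∀ e ∈ E, σ e.1 < σ e.2

/-- Sorting by the number of ancestors (ties broken by the label) puts every arc forwards. -/
lemma IsAcyclic.exists_isForward {E : ArcSet n} (hA : IsAcyclic E) : ∃ σ, IsForward E σ := by
  let anc : Fin n → Finset (Fin n) := fun v =>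
    {u | Relation.TransGen (fun a b => (a, b) ∈ E) u v}
  have hanc : ∀ e ∈ E, #(anc e.1) < #(anc e.2) := fun e he => by
    refine card_lt_card ((ssubset_iff_of_subset fun u hu => ?_).mpr ⟨e.1, ?_, ?_⟩)
    · simp only [anc, mem_filter, mem_univ, true_and] at hu ⊢
      exact hu.tail he
    · simpa [anc] using Relation.TransGen.single he
    · simpa [anc] using hA.not_transGen_self e.1
  obtain ⟨σ, hσ⟩ := exists_perm_lt_iff_of_injective (f := fun v => toLex (#(anc v), v))
    fun a b h => congrArg Prod.snd (toLex.injective h)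
  exact ⟨σ, fun e he => (hσ _ _).mpr (Prod.Lex.toLex_lt_toLex.mpr (Or.inl (hanc e he)))⟩

noncomputable def topSort (E : ArcSet n) : Equiv.Perm (Fin n) := Classical.epsilon (IsForward E)

lemma IsAcyclic.isForward_topSort {E : ArcSet n} (hA : IsAcyclic E) : IsForward E (topSort E) :=
  Classical.epsilon_spec hA.exists_isForward

end TopologicalOrder

namespace BlockCycles

/-- `m` groups of `K` slots of `l` consecutive positions fit into `[n]`. -/
structure Layout (n l m K : ℕ) : Prop where
  three_le : 3 ≤ l
  mul_le : K * l * m ≤ n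

variable {n l m K : ℕ}

lemma Layout.pos (L : Layout n l m K) : 0 < l := by have := L.three_le; omega

/-- The `i`-th cycle occupies slot `s i` among the `K` slots of the `i`-th group. -/
def slot (s : Fin m → Fin K) (i : Fin m) : ℕ := i * K + s i

lemma slot_inj {s s' : Fin m → Fin K} {i i' : Fin m} (h : slot s i = slot s' i') :
    i = i' ∧ s i = s' i' := by
  obtain ⟨hi, hs⟩ := Nat.eq_and_eq_of_mul_add_eq (s i).isLt (s' i').isLt h
  exact ⟨Fin.ext hi, Fin.ext hs⟩

lemma Layout.slot_mul_add_lt (L : Layout n l m K) (s : Fin m → Fin K) (i : Fin m) {j : ℕ}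
    (hj : j < l) : slot s i * l + j < n := by
  have hslot : slot s i + 1 ≤ K * m := by
    have := Nat.mul_le_mul_right K (Nat.succ_le_of_lt i.isLt)
    simp only [slot]
    nlinarith [(s i).isLt]
  nlinarith [L.mul_le]

/-- The `j`-th vertex (indices mod `l`) of the `i`-th inserted cycle. -/
def vtx (L : Layout n l m K) (σ : Equiv.Perm (Fin n)) (s : Fin m → Fin K) (i : Fin m) (j : ℕ) :
    Fin n :=
  σ.symm ⟨slot s i * l + j % l, L.slot_mul_add_lt s i (Nat.mod_lt _ L.pos)⟩

variable {L : Layout n l m K} {σ : Equiv.Perm (Fin n)} {s : Fin m → Fin K}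

@[simp]
lemma val_apply_vtx (i : Fin m) (j : ℕ) : (σ (vtx L σ s i j) : ℕ) = slot s i * l + j % l := by
  simp [vtx]

lemma vtx_congr (i : Fin m) {j j' : ℕ} (h : j % l = j' % l) :
    vtx L σ s i j = vtx L σ s i j' := by
  simp only [vtx, h]

lemma vtx_periodic (i : Fin m) : Periodic (vtx L σ s i) l :=
  fun j => vtx_congr i (by simp)

lemma vtx_eq_vtx_iff {s' : Fin m → Fin K} {i i' : Fin m} {j j' : ℕ} :
    vtx L σ s i j = vtx L σ s' i' j' ↔ i = i' ∧ s i = s' i' ∧ j % l = j' % l := by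
  refine ⟨fun h => ?_, fun ⟨hi, hs, hj⟩ => ?_⟩
  · have hpos := congrArg (fun x => (σ x : ℕ)) h
    simp only [val_apply_vtx] at hpos
    obtain ⟨hslot, hj⟩ :=
      Nat.eq_and_eq_of_mul_add_eq (Nat.mod_lt _ L.pos) (Nat.mod_lt _ L.pos) hpos
    exact ⟨(slot_inj hslot).1, (slot_inj hslot).2, hj⟩
  · subst hi
    simp only [vtx, slot, hs, hj]

lemma vtx_add_ne (i : Fin m) (j : ℕ) {d : ℕ} (hd : 0 < d) (hdl : d < l) :
    vtx L σ s i (j + d) ≠ vtx L σ s i j := fun h => by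
  have hmod := (vtx_eq_vtx_iff.mp h).2.2
  have hdvd : l ∣ d := by simpa using (Nat.modEq_iff_dvd' (Nat.le_add_right j d)).mp hmod.symm
  exact absurd (Nat.le_of_dvd hd hdvd) (by omega)

lemma exists_vtx_add_eq (i : Fin m) (j d : ℕ) : ∃ c, vtx L σ s i (j + c) = vtx L σ s i d := by
  have hj : j ≤ d + l * j := le_add_left (Nat.le_mul_of_pos_left j L.pos)
  exact ⟨d + l * j - j, vtx_congr i (by rw [Nat.add_sub_cancel' hj, Nat.add_mul_mod_self_left])⟩

variable (L σ s) in
def block (i : Fin m) : Finset (Fin n) := (range l).image (vtx L σ s i)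

lemma vtx_mem_block (i : Fin m) (j : ℕ) : vtx L σ s i j ∈ block L σ s i :=
  mem_image.mpr ⟨j % l, mem_range.mpr (Nat.mod_lt _ L.pos), vtx_congr i (Nat.mod_mod _ _)⟩

lemma mem_block_iff {i : Fin m} {x : Fin n} :
    x ∈ block L σ s i ↔ ∃ j < l, vtx L σ s i j = x := by
  simp [block]

lemma eq_of_mem_block {i i' : Fin m} {x : Fin n} (h : x ∈ block L σ s i)
    (h' : x ∈ block L σ s i') : i = i' := by
  obtain ⟨j, -, rfl⟩ := mem_block_iff.mp h
  obtain ⟨j', -, hj'⟩ := mem_block_iff.mp h'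
  exact (vtx_eq_vtx_iff.mp hj'.symm).1

lemma mem_block_iff_val {i : Fin m} {x : Fin n} :
    x ∈ block L σ s i ↔ slot s i * l ≤ σ x ∧ (σ x : ℕ) < slot s i * l + l := by
  refine ⟨fun h => ?_, fun ⟨hlo, hhi⟩ =>
    mem_block_iff.mpr ⟨σ x - slot s i * l, by omega, ?_⟩⟩
  · obtain ⟨j, hj, rfl⟩ := mem_block_iff.mp h
    simp only [val_apply_vtx, Nat.mod_eq_of_lt hj]
    omega
  · apply σ.injective
    ext
    simp only [val_apply_vtx, Nat.mod_eq_of_lt (show (σ x : ℕ) - slot s i * l < l by omega)]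
    omega

variable (L σ s) in
def SameBlock (x y : Fin n) : Prop := ∃ i, x ∈ block L σ s i ∧ y ∈ block L σ s i

variable (L σ s) in
def cycleArcs : ArcSet n :=
  univ.biUnion fun i => (range l).image fun j => (vtx L σ s i j, vtx L σ s i (j + 1))

lemma vtx_mem_cycleArcs (i : Fin m) (j : ℕ) :
    (vtx L σ s i j, vtx L σ s i (j + 1)) ∈ cycleArcs L σ s := by
  refine mem_biUnion.mpr ⟨i, mem_univ i,
    mem_image.mpr ⟨j % l, mem_range.mpr (Nat.mod_lt _ L.pos), ?_⟩⟩
  rw [vtx_congr i (Nat.mod_mod j l), vtx_congr i (Nat.mod_add_mod j l 1)]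

lemma mem_cycleArcs_iff {e : Fin n × Fin n} :
    e ∈ cycleArcs L σ s ↔ ∃ i, ∃ j < l, e = (vtx L σ s i j, vtx L σ s i (j + 1)) := by
  simp [cycleArcs, eq_comm]

lemma eq_vtx_succ_of_mem_cycleArcs {i : Fin m} {j : ℕ} {y : Fin n}
    (he : (vtx L σ s i j, y) ∈ cycleArcs L σ s) : y = vtx L σ s i (j + 1) := by
  obtain ⟨i', j', -, he'⟩ := mem_cycleArcs_iff.mp he
  simp only [Prod.mk.injEq] at he'
  obtain ⟨hsrc, rfl⟩ := he'
  obtain ⟨rfl, -, hj⟩ := vtx_eq_vtx_iff.mp hsrc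
  exact vtx_congr i (Nat.ModEq.add_right 1 hj).symm

lemma sameBlock_of_mem_cycleArcs {e : Fin n × Fin n} (he : e ∈ cycleArcs L σ s) :
    SameBlock L σ s e.1 e.2 := by
  obtain ⟨i, j, -, rfl⟩ := mem_cycleArcs_iff.mp he
  exact ⟨i, vtx_mem_block i j, vtx_mem_block i (j + 1)⟩

variable (L σ s) in
noncomputable def insertCycles (G : ArcSet n) : ArcSet n :=
  G.filter (fun e => ¬ SameBlock L σ s e.1 e.2) ∪ cycleArcs L σ s

lemma mem_insertCycles_iff {G : ArcSet n} {e : Fin n × Fin n} :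
    e ∈ insertCycles L σ s G ↔
      (e ∈ G ∧ ¬ SameBlock L σ s e.1 e.2) ∨ e ∈ cycleArcs L σ s := by
  simp [insertCycles]

variable {G : ArcSet n}

lemma lt_or_eq_backArc_of_mem_insertCycles (hG : IsForward G σ) {e : Fin n × Fin n}
    (he : e ∈ insertCycles L σ s G) :
    σ e.1 < σ e.2 ∨ ∃ i, e = (vtx L σ s i (l - 1), vtx L σ s i 0) := by
  rcases mem_insertCycles_iff.mp he with ⟨heG, -⟩ | hcyc
  · exact Or.inl (hG e heG)
  obtain ⟨i, j, hj, rfl⟩ := mem_cycleArcs_iff.mp hcyc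
  rcases Nat.lt_or_ge (j + 1) l with hj1 | hj1
  · left
    rw [Fin.lt_def, val_apply_vtx, val_apply_vtx, Nat.mod_eq_of_lt hj,
      Nat.mod_eq_of_lt hj1]
    omega
  · obtain rfl : j = l - 1 := by omega
    exact Or.inr ⟨i, by rw [Nat.sub_add_cancel L.pos, vtx_congr (j := l) (j' := 0) i (by simp)]⟩

/-- The only backward arcs of `insertCycles` stay inside a block. -/
lemma le_val_of_mem_insertCycles (hG : IsForward G σ) {e : Fin n × Fin n}
    (he : e ∈ insertCycles L σ s G) {t : ℕ} (ht : t * l ≤ σ e.1) : t * l ≤ σ e.2 := by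
  rcases lt_or_eq_backArc_of_mem_insertCycles hG he with hlt | ⟨i, rfl⟩
  · exact ht.trans (Fin.lt_def.mp hlt).le
  simp only [val_apply_vtx, Nat.zero_mod, Nat.add_zero,
    Nat.mod_eq_of_lt (Nat.sub_lt L.pos Nat.one_pos)] at ht ⊢
  have : t < slot s i + 1 := by
    have := L.pos
    refine Nat.lt_of_mul_lt_mul_right (a := l) ?_
    rw [Nat.succ_mul]
    omega
  exact Nat.mul_le_mul_right l (Nat.lt_succ_iff.mp this)

lemma eq_vtx_succ_of_mem_insertCycles {i : Fin m} {j : ℕ} {y : Fin n}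
    (he : (vtx L σ s i j, y) ∈ insertCycles L σ s G) (hy : y ∈ block L σ s i) :
    y = vtx L σ s i (j + 1) := by
  rcases mem_insertCycles_iff.mp he with ⟨-, hsame⟩ | hcyc
  · exact absurd ⟨i, vtx_mem_block i j, hy⟩ hsame
  · exact eq_vtx_succ_of_mem_cycleArcs hcyc

lemma exists_eq_vtx_of_periodic (hG : IsForward G σ) {q : ℕ} (hq : 0 < q) {g : ℕ → Fin n}
    (hper : Periodic g q) (harc : ∀ a, (g a, g (a + 1)) ∈ insertCycles L σ s G) :
    ∃ i a₀, ∀ c, g (a₀ + c) = vtx L σ s i c := by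
  obtain ⟨a₀, -, hmin⟩ :=
    exists_min_image (range q) (fun a => σ (g a)) ⟨0, mem_range.mpr hq⟩
  replace hmin : ∀ a, σ (g a₀) ≤ σ (g a) := fun a => by
    rw [← hper.map_mod_nat a]
    exact hmin _ (mem_range.mpr (Nat.mod_lt a hq))
  -- the arc entering the lowest vertex of the walk is backward, so it closes an inserted cycle
  have hin := harc (a₀ + q - 1)
  rw [Nat.sub_add_cancel (by omega), hper] at hin
  obtain ⟨i, hi⟩ : ∃ i, g a₀ = vtx L σ s i 0 := by
    rcases lt_or_eq_backArc_of_mem_insertCycles hG hin with hlt | ⟨i, he⟩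
    · exact absurd (hmin _) (not_le.mpr hlt)
    · exact ⟨i, (Prod.ext_iff.mp he).2⟩
  have hbelow : ∀ a, (σ (g a) : ℕ) < slot s i * l + l := fun a => by
    by_contra! hb
    have hstay : ∀ c, (slot s i + 1) * l ≤ σ (g (a + c)) := fun c => by
      induction c with
      | zero => simpa [Nat.succ_mul] using hb
      | succ c ih => exact le_val_of_mem_insertCycles hG (harc (a + c)) ih
    have hback := hstay (a₀ + a * q - a)
    have hreturn : g (a₀ + a * q) = g a₀ := by simpa using hper.nat_mul a a₀
    rw [Nat.add_sub_cancel' (le_add_left (Nat.le_mul_of_pos_right a hq)), hreturn, hi,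
      val_apply_vtx] at hback
    rw [Nat.succ_mul, Nat.zero_mod] at hback
    have := L.pos
    omega
  refine ⟨i, a₀, fun c => ?_⟩
  induction c with
  | zero => exact hi
  | succ c ih =>
    refine eq_vtx_succ_of_mem_insertCycles (ih ▸ harc (a₀ + c))
      (mem_block_iff_val.mpr ⟨?_, hbelow _⟩)
    have := hmin (a₀ + c + 1)
    rw [hi, Fin.le_iff_val_le_val, val_apply_vtx] at this
    simpa [Nat.add_assoc] using this

lemma eq_of_containsCycle_insertCycles (hG : IsForward G σ) {p : ℕ} (hp : 0 < p)
    (h : ContainsCycle p (insertCycles L σ s G)) : p = l := by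
  obtain ⟨g, hper, harc, hinj⟩ := h.exists_periodic
  obtain ⟨i, a₀, hg⟩ := exists_eq_vtx_of_periodic hG hp hper harc
  have hlp : l ∣ p := by
    have h0 : vtx L σ s i p = vtx L σ s i 0 := by rw [← hg, ← hg, Nat.add_zero, hper]
    simpa using Nat.dvd_of_mod_eq_zero (vtx_eq_vtx_iff.mp h0).2.2
  have hpl : p ∣ l := by
    have h0 : g (a₀ + l) = g (a₀ + 0) := by rw [hg, hg]; exact vtx_congr i (by simp)
    simpa [ZMod.natCast_eq_zero_iff] using hinj _ _ h0
  exact Nat.dvd_antisymm hpl hlp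

def OnClosedWalk (E : ArcSet n) (e : Fin n × Fin n) : Prop :=
  ∃ q, 0 < q ∧ ∃ g : ℕ → Fin n, Periodic g q ∧ (∀ a, (g a, g (a + 1)) ∈ E) ∧
    ∃ a, (g a, g (a + 1)) = e

lemma onClosedWalk_insertCycles_iff (hG : IsForward G σ) {e : Fin n × Fin n} :
    OnClosedWalk (insertCycles L σ s G) e ↔ e ∈ cycleArcs L σ s := by
  refine ⟨fun ⟨q, hq, g, hper, harc, a, hae⟩ => ?_, fun he => ?_⟩
  · obtain ⟨i, a₀, hg⟩ := exists_eq_vtx_of_periodic hG hq hper harc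
    have hle := Nat.le_mul_of_pos_right a₀ hq
    obtain ⟨c, hc⟩ : ∃ c, a + a₀ * q = a₀ + c := ⟨a + a₀ * q - a₀, by omega⟩
    have hshift : ∀ b, g (b + a₀ * q) = g b := fun b => by simpa using hper.nat_mul a₀ b
    rw [← hae, ← hshift a, ← hshift (a + 1), Nat.add_right_comm, hc, Nat.add_assoc, hg, hg]
    exact vtx_mem_cycleArcs i c
  · obtain ⟨i, j, -, rfl⟩ := mem_cycleArcs_iff.mp he
    refine ⟨l, L.pos, fun a => vtx L σ s i (j + a), fun a => ?_, fun a => ?_, 0, rfl⟩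
    · simpa [← Nat.add_assoc] using vtx_periodic i (j + a)
    · exact mem_insertCycles_iff.mpr (Or.inr (vtx_mem_cycleArcs i (j + a)))

lemma cycleArcs_eq_of_insertCycles_eq {σ' : Equiv.Perm (Fin n)} {s' : Fin m → Fin K}
    {G' : ArcSet n} (hG : IsForward G σ) (hG' : IsForward G' σ')
    (h : insertCycles L σ s G = insertCycles L σ' s' G') :
    cycleArcs L σ s = cycleArcs L σ' s' := by
  ext e
  rw [← onClosedWalk_insertCycles_iff hG, ← onClosedWalk_insertCycles_iff hG', h]

/-- The arc leaving the `τ`-last vertex of the walk is backward. -/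
lemma exists_backward_of_periodic {q : ℕ} (hq : 0 < q) {g : ℕ → Fin n} (hper : Periodic g q)
    (hne : ∀ a, g (a + 1) ≠ g a) (τ : Equiv.Perm (Fin n)) :
    ∃ a, τ (g (a + 1)) < τ (g a) := by
  obtain ⟨a, -, hmax⟩ :=
    exists_max_image (range q) (fun a => τ (g a)) ⟨0, mem_range.mpr hq⟩
  refine ⟨a, lt_of_le_of_ne ?_ (τ.injective.ne (hne a))⟩
  rw [← hper.map_mod_nat (a + 1)]
  exact hmax _ (mem_range.mpr (Nat.mod_lt _ hq))

lemma bMin_insertCycles (hG : IsForward G σ) : bMin (insertCycles L σ s G) = m := by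
  refine le_antisymm ((inf'_le _ (mem_univ σ)).trans ?_) (le_inf' _ _ fun τ _ => ?_)
  · -- under `σ` the only backward arcs are the `m` closing arcs of the inserted cycles
    calc backCount (insertCycles L σ s G) σ
        ≤ #(univ.image fun i : Fin m => (vtx L σ s i (l - 1), vtx L σ s i 0)) := by
          refine card_le_card fun e he => ?_
          obtain ⟨he, hback⟩ := mem_filter.mp he
          rcases lt_or_eq_backArc_of_mem_insertCycles hG he with hlt | ⟨i, rfl⟩
          · exact absurd hlt (lt_asymm hback)
          · exact mem_image_of_mem _ (mem_univ i)
      _ ≤ m := card_image_le.trans_eq (card_fin m)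
  · have hback : ∀ i, ∃ j, τ (vtx L σ s i (j + 1)) < τ (vtx L σ s i j) := fun i =>
      exists_backward_of_periodic L.pos (vtx_periodic i)
        (fun j => vtx_add_ne i j Nat.one_pos (by have := L.three_le; omega)) τ
    choose j hj using hback
    calc m = #(univ : Finset (Fin m)) := (card_fin m).symm
      _ ≤ backCount (insertCycles L σ s G) τ := by
        refine card_le_card_of_injOn (fun i => (vtx L σ s i (j i), vtx L σ s i (j i + 1)))
          (fun i _ => mem_filter.mpr ⟨mem_insertCycles_iff.mpr
            (Or.inr (vtx_mem_cycleArcs i (j i))), hj i⟩)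
          fun i _ i' _ h => ((vtx_eq_vtx_iff (L := L)).mp (Prod.ext_iff.mp h).1).1

lemma isOriented_insertCycles (hG : IsOriented G) : IsOriented (insertCycles L σ s G) := by
  have hl := L.three_le
  refine ⟨fun v hv => ?_, fun u v huv hvu => ?_⟩
  · rcases mem_insertCycles_iff.mp hv with ⟨hvG, -⟩ | hcyc
    · exact hG.1 v hvG
    obtain ⟨i, j, -, he⟩ := mem_cycleArcs_iff.mp hcyc
    simp only [Prod.mk.injEq] at he
    exact vtx_add_ne i j Nat.one_pos (by omega) (he.2.symm.trans he.1)
  rcases mem_insertCycles_iff.mp huv with ⟨huvG, huvB⟩ | huvC <;>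
    rcases mem_insertCycles_iff.mp hvu with ⟨hvuG, hvuB⟩ | hvuC
  · exact hG.2 u v huvG hvuG
  · obtain ⟨i, hv, hu⟩ := sameBlock_of_mem_cycleArcs hvuC
    exact huvB ⟨i, hu, hv⟩
  · obtain ⟨i, hu, hv⟩ := sameBlock_of_mem_cycleArcs huvC
    exact hvuB ⟨i, hv, hu⟩
  -- two opposite cycle arcs would make `u` both the `j`-th and the `(j+2)`-th vertex of a cycle
  obtain ⟨i, j, -, he⟩ := mem_cycleArcs_iff.mp huvC
  obtain ⟨i', j', -, he'⟩ := mem_cycleArcs_iff.mp hvuC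
  simp only [Prod.mk.injEq] at he he'
  obtain ⟨hi, -, hj⟩ := vtx_eq_vtx_iff.mp (he.2.symm.trans he'.1)
  subst hi
  have hu : vtx L σ s i (j + 2) = vtx L σ s i j := by
    rw [← he.1, he'.2]
    exact vtx_congr i (Nat.ModEq.add_right 1 hj)
  exact vtx_add_ne i j (by norm_num) (by omega) hu

lemma insertCycles_mem_Fm {k : ℕ} (hk : 0 < k) (hlk : l ≠ k) (hG : G ∈ F0 n k)
    (hσ : IsForward G σ) : insertCycles L σ s G ∈ Fm n k m := by
  obtain ⟨hor, -, -⟩ := (mem_filter.mp hG).2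
  exact mem_filter.mpr ⟨mem_univ _, isOriented_insertCycles hor,
    fun h => hlk (eq_of_containsCycle_insertCycles hσ hk h).symm, bMin_insertCycles hσ⟩


section Alignment

variable {σ' : Equiv.Perm (Fin n)} {s' : Fin m → Fin K}

lemma vtx_add_eq_of_cycleArcs_eq (hZ : cycleArcs L σ s = cycleArcs L σ' s') {i i' : Fin m}
    {j j' : ℕ} (h : vtx L σ s i j = vtx L σ' s' i' j') (c : ℕ) :
    vtx L σ s i (j + c) = vtx L σ' s' i' (j' + c) := by
  induction c with
  | zero => exact h
  | succ c ih =>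
    have harc := hZ ▸ vtx_mem_cycleArcs (L := L) (σ := σ) (s := s) i (j + c)
    rw [ih] at harc
    exact eq_vtx_succ_of_mem_cycleArcs harc

lemma block_subset_of_vtx_eq (hZ : cycleArcs L σ s = cycleArcs L σ' s') {i i' : Fin m}
    {j j' : ℕ} (h : vtx L σ s i j = vtx L σ' s' i' j') :
    block L σ s i ⊆ block L σ' s' i' := by
  intro x hx
  obtain ⟨d, -, rfl⟩ := mem_block_iff.mp hx
  obtain ⟨c, hc⟩ := exists_vtx_add_eq (L := L) (σ := σ) (s := s) i j d
  rw [← hc, vtx_add_eq_of_cycleArcs_eq hZ h c]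
  exact vtx_mem_block i' _

lemma exists_block_eq (hZ : cycleArcs L σ s = cycleArcs L σ' s') (i : Fin m) :
    ∃ i', block L σ s i = block L σ' s' i' := by
  obtain ⟨i', j', -, he⟩ := mem_cycleArcs_iff.mp (hZ ▸ vtx_mem_cycleArcs (L := L) i 0)
  have h := (Prod.ext_iff.mp he).1
  exact ⟨i', (block_subset_of_vtx_eq hZ h).antisymm (block_subset_of_vtx_eq hZ.symm h.symm)⟩

lemma SameBlock.of_cycleArcs_eq (hZ : cycleArcs L σ s = cycleArcs L σ' s') {x y : Fin n}
    (h : SameBlock L σ s x y) : SameBlock L σ' s' x y := by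
  obtain ⟨i, hx, hy⟩ := h
  obtain ⟨i', hb⟩ := exists_block_eq hZ i
  exact ⟨i', hb ▸ hx, hb ▸ hy⟩

lemma eq_of_cycleArcs_eq (h : cycleArcs L σ s = cycleArcs L σ s') :
    s = s' := by
  funext i
  obtain ⟨i', j', -, he⟩ := mem_cycleArcs_iff.mp (h ▸ vtx_mem_cycleArcs (L := L) i 0)
  obtain ⟨rfl, hs, -⟩ := (vtx_eq_vtx_iff (L := L)).mp (Prod.ext_iff.mp he).1
  exact hs

end Alignment

section Offsets

variable (L σ) in
/-- Blocks start at multiples of `l`, so this is the position of `x` inside its block. -/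
def offset (x : Fin n) : Fin l := ⟨(σ x : ℕ) % l, Nat.mod_lt _ L.pos⟩

lemma val_offset_vtx (i : Fin m) (j : ℕ) : (offset L σ (vtx L σ s i j) : ℕ) = j % l := by
  simp [offset]

lemma eq_of_offset_eq {i : Fin m} {x y : Fin n} (hx : x ∈ block L σ s i)
    (hy : y ∈ block L σ s i) (h : offset L σ x = offset L σ y) : x = y := by
  obtain ⟨j, -, rfl⟩ := mem_block_iff.mp hx
  obtain ⟨j', -, rfl⟩ := mem_block_iff.mp hy
  have := congrArg Fin.val h
  rw [val_offset_vtx, val_offset_vtx] at this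
  exact vtx_congr i this

lemma offset_lt_offset {i : Fin m} {x y : Fin n} (hx : x ∈ block L σ s i)
    (hy : y ∈ block L σ s i) (h : σ x < σ y) : offset L σ x < offset L σ y := by
  obtain ⟨j, hj, rfl⟩ := mem_block_iff.mp hx
  obtain ⟨j', hj', rfl⟩ := mem_block_iff.mp hy
  rw [Fin.lt_def, val_apply_vtx, val_apply_vtx] at h
  rw [Fin.lt_def, val_offset_vtx, val_offset_vtx]
  exact Nat.lt_of_add_lt_add_left h

lemma offset_eq_of_cycleArcs_eq {σ' : Equiv.Perm (Fin n)} {s' : Fin m → Fin K}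
    (hZ : cycleArcs L σ s = cycleArcs L σ' s') {i i' : Fin m} {z x : Fin n}
    (hz : z ∈ block L σ s i) (hz' : z ∈ block L σ' s' i')
    (hoff : offset L σ z = offset L σ' z) (hx : x ∈ block L σ s i) :
    offset L σ x = offset L σ' x := by
  obtain ⟨j, -, rfl⟩ := mem_block_iff.mp hz
  obtain ⟨j', -, hj'⟩ := mem_block_iff.mp hz'
  obtain ⟨d, -, rfl⟩ := mem_block_iff.mp hx
  obtain ⟨c, hc⟩ := exists_vtx_add_eq (L := L) (σ := σ) (s := s) i j d
  have hoff' : j % l = j' % l := by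
    rw [← val_offset_vtx (L := L) (σ := σ) (s := s) i j, hoff, ← hj', val_offset_vtx]
  ext
  rw [← hc, val_offset_vtx, vtx_add_eq_of_cycleArcs_eq hZ hj'.symm c, val_offset_vtx]
  exact Nat.ModEq.add_right c hoff'

end Offsets

variable (L σ s) in
/-- The data at the block of `x` that `insertCycles` forgets: the offset of `x` and the arcs of
`G` inside the block. -/
noncomputable def blockCode (G : ArcSet n) (x : Fin n) : Fin l × Finset (Fin l × Fin l) :=
  (offset L σ x, (G.filter fun e => SameBlock L σ s x e.1 ∧ SameBlock L σ s x e.2).image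
    fun e => (offset L σ e.1, offset L σ e.2))

lemma blockCode_mem (hG : IsForward G σ) (x : Fin n) :
    blockCode L σ s G x ∈
      (univ : Finset (Fin l)) ×ˢ ({q | q.1 < q.2} : Finset (Fin l × Fin l)).powerset := by
  refine mem_product.mpr ⟨mem_univ _, mem_powerset.mpr fun q hq => ?_⟩
  obtain ⟨e, he, rfl⟩ := mem_image.mp hq
  obtain ⟨heG, ⟨i, hx, h1⟩, ⟨i', hx', h2⟩⟩ := mem_filter.mp he
  obtain rfl := eq_of_mem_block hx hx'
  exact mem_filter.mpr ⟨mem_univ _, offset_lt_offset h1 h2 (hG e heG)⟩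

lemma mem_of_blockCode_eq {σ' : Equiv.Perm (Fin n)} {s' : Fin m → Fin K} {G' : ArcSet n}
    (hG : IsForward G σ) (hG' : IsForward G' σ')
    (hH : insertCycles L σ s G = insertCycles L σ' s' G') {A : Fin m → Fin n}
    (hA : ∀ i, ∃ r, A r ∈ block L σ s i)
    (hcode : ∀ r, blockCode L σ s G (A r) = blockCode L σ' s' G' (A r))
    {e : Fin n × Fin n} (he : e ∈ G) : e ∈ G' := by
  have hZ := cycleArcs_eq_of_insertCycles_eq hG hG' hH
  by_cases hB : SameBlock L σ s e.1 e.2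
  swap
  · -- outside the blocks `G` and `G'` both agree with the common image
    have hB' : ¬ SameBlock L σ' s' e.1 e.2 := fun h => hB (h.of_cycleArcs_eq hZ.symm)
    have he' := hH ▸ mem_insertCycles_iff.mpr (Or.inl ⟨he, hB⟩)
    rcases mem_insertCycles_iff.mp he' with ⟨he', -⟩ | hcyc
    · exact he'
    · exact absurd (sameBlock_of_mem_cycleArcs hcyc) hB'
  obtain ⟨i, h1, h2⟩ := hB
  obtain ⟨r, hr⟩ := hA i
  obtain ⟨i', hb⟩ := exists_block_eq hZ i
  have hoff : ∀ x ∈ block L σ s i, offset L σ x = offset L σ' x := fun x hx =>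
    offset_eq_of_cycleArcs_eq hZ hr (hb ▸ hr) (congrArg Prod.fst (hcode r)) hx
  have hmem : (offset L σ e.1, offset L σ e.2) ∈ (blockCode L σ' s' G' (A r)).2 := by
    rw [← hcode r]
    exact mem_image_of_mem _ (mem_filter.mpr ⟨he, ⟨i, hr, h1⟩, ⟨i, hr, h2⟩⟩)
  obtain ⟨e', he', hoffe'⟩ := mem_image.mp hmem
  obtain ⟨he'G, ⟨i₁, hr₁, h₁⟩, ⟨i₂, hr₂, h₂⟩⟩ := mem_filter.mp he'
  obtain rfl := eq_of_mem_block hr₁ (hb ▸ hr)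
  obtain rfl := eq_of_mem_block hr₂ (hb ▸ hr)
  simp only [Prod.mk.injEq] at hoffe'
  have hee' : e' = e := Prod.ext
    (eq_of_offset_eq h₁ (hb ▸ h1) (hoffe'.1.trans (hoff _ h1)))
    (eq_of_offset_eq h₂ (hb ▸ h2) (hoffe'.2.trans (hoff _ h2)))
  exact hee' ▸ he'G

variable (L) in
noncomputable def insertMap (p : ArcSet n × (Fin m → Fin K)) : ArcSet n :=
  insertCycles L (topSort p.1) p.2 p.1

lemma eq_of_blockCode_eq {p p' : ArcSet n × (Fin m → Fin K)}
    (hp : IsForward p.1 (topSort p.1)) (hp' : IsForward p'.1 (topSort p'.1))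
    (hH : insertMap L p = insertMap L p') {A : Fin m → Fin n}
    (hA : ∀ i, ∃ r, A r ∈ block L (topSort p.1) p.2 i)
    (hA' : ∀ i, ∃ r, A r ∈ block L (topSort p'.1) p'.2 i)
    (hcode : ∀ r, blockCode L (topSort p.1) p.2 p.1 (A r) =
      blockCode L (topSort p'.1) p'.2 p'.1 (A r)) : p = p' := by
  have hG : p.1 = p'.1 := by
    ext e
    exact ⟨mem_of_blockCode_eq hp hp' hH hA hcode,
      mem_of_blockCode_eq hp' hp hH.symm hA' fun r => (hcode r).symm⟩
  have hZ := cycleArcs_eq_of_insertCycles_eq hp hp' hH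
  rw [← hG] at hZ
  exact Prod.ext hG (eq_of_cycleArcs_eq hZ)

/-- The blocks of any fibre element are those of a fixed one `p₀`; anchored at the first vertices
of the blocks of `p₀`, the block codes determine the fibre element. -/
lemma card_fiber_le {k : ℕ} (H : ArcSet n) :
    #{p ∈ F0 n k ×ˢ (univ : Finset (Fin m → Fin K)) | insertMap L p = H} ≤
      (l * 2 ^ l.choose 2) ^ m := by
  set S := {p ∈ F0 n k ×ˢ (univ : Finset (Fin m → Fin K)) | insertMap L p = H}
  obtain hS | ⟨p₀, hp₀⟩ := S.eq_empty_or_nonempty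
  · simp [hS]
  have hfwd : ∀ p ∈ S, IsForward p.1 (topSort p.1) := fun p hp =>
    (IsAcyclic.of_mem_F0 (mem_product.mp (mem_filter.mp hp).1).1).isForward_topSort
  have hH : ∀ p ∈ S, insertMap L p = H := fun p hp => (mem_filter.mp hp).2
  let A : Fin m → Fin n := fun r => vtx L (topSort p₀.1) p₀.2 r 0
  have hA : ∀ p ∈ S, ∀ i, ∃ r, A r ∈ block L (topSort p.1) p.2 i := fun p hp i => by
    obtain ⟨r, hb⟩ := exists_block_eq (cycleArcs_eq_of_insertCycles_eq (hfwd p hp)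
      (hfwd p₀ hp₀) ((hH p hp).trans (hH p₀ hp₀).symm)) i
    exact ⟨r, hb ▸ vtx_mem_block r 0⟩
  let T : Finset (Fin l × Finset (Fin l × Fin l)) :=
    univ ×ˢ ({q | q.1 < q.2} : Finset (Fin l × Fin l)).powerset
  calc #S ≤ #(Fintype.piFinset fun _ : Fin m => T) :=
        card_le_card_of_injOn (fun p r => blockCode L (topSort p.1) p.2 p.1 (A r))
          (fun p hp => Fintype.mem_piFinset.mpr fun r => blockCode_mem (hfwd p hp) _)
          fun p hp p' hp' h => eq_of_blockCode_eq (hfwd p hp) (hfwd p' hp')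
            ((hH p hp).trans (hH p' hp').symm) (hA p hp) (hA p' hp') (congrFun h)
    _ = (l * 2 ^ l.choose 2) ^ m := by simp [T, Fintype.card_product_filter_lt]

theorem card_F0_mul_pow_le (L : Layout n l m K) {k : ℕ} (hk : 0 < k) (hlk : l ≠ k) :
    #(F0 n k) * K ^ m ≤ (l * 2 ^ l.choose 2) ^ m * #(Fm n k m) := by
  have := card_le_mul_card_image_of_maps_to (s := F0 n k ×ˢ (univ : Finset (Fin m → Fin K)))
    (f := insertMap L)
    (fun p hp => insertCycles_mem_Fm hk hlk (mem_product.mp hp).1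
      (IsAcyclic.of_mem_F0 (mem_product.mp hp).1).isForward_topSort) _
    fun H _ => card_fiber_le H
  simpa [card_product] using this

end BlockCycles

/-- For `k ≥ 3`, for all large `n` and all `0 ≤ m ≤ n/2¹³`,
`|F_m| ≥ 2^m |F_0|`. -/
theorem Fm_ge_two_pow_F0 (k : ℕ) (hk : 3 ≤ k) :
    ∃ N : ℕ, ∀ n ≥ N, ∀ m : ℕ, (m : ℝ) ≤ (n : ℝ) / 2 ^ 13 →
      2 ^ m * (F0 n k).card ≤ (Fm n k m).card := by
  refine ⟨0, fun n _ m hm => ?_⟩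
  obtain ⟨l, hl3, hl4, hlk⟩ : ∃ l, 3 ≤ l ∧ l ≤ 4 ∧ l ≠ k :=
    if h : k = 3 then ⟨4, by omega, le_rfl, by omega⟩ else ⟨3, le_rfl, by omega, Ne.symm h⟩
  have hmn : 2 ^ 11 * l * m ≤ n := by
    have hl : (l : ℝ) ≤ 4 := by exact_mod_cast hl4
    rw [le_div_iff₀ (by positivity)] at hm
    exact_mod_cast (show (2 ^ 11 * l * m : ℝ) ≤ n by nlinarith [m.cast_nonneg (α := ℝ)])
  have hcount := BlockCycles.card_F0_mul_pow_le ⟨hl3, hmn⟩ (by omega : 0 < k) hlk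
  have hcode : l * 2 ^ l.choose 2 ≤ 2 ^ 8 := by interval_cases l <;> decide
  refine Nat.le_of_mul_le_mul_right (?_ : _ * (2 ^ 8) ^ m ≤ _ * (2 ^ 8) ^ m) (by positivity)
  calc 2 ^ m * #(F0 n k) * (2 ^ 8) ^ m = #(F0 n k) * (2 ^ 9) ^ m := by
        rw [show (2 : ℕ) ^ 9 = 2 * 2 ^ 8 by norm_num, mul_pow]; ring
    _ ≤ #(F0 n k) * (2 ^ 11) ^ m := by gcongr <;> norm_num
    _ ≤ (l * 2 ^ l.choose 2) ^ m * #(Fm n k m) := hcount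
    _ ≤ (2 ^ 8) ^ m * #(Fm n k m) := by gcongr
    _ = #(Fm n k m) * (2 ^ 8) ^ m := mul_comm _ _
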